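/- For every nonnegative integer n: q^{n²} / (q²;q²)_n · Σ_{k=0}^n ((q^{−n};q)_k (−q^{−n};q)_k / (q;q)_k) (−q)^k = Σ_{k=−n}^n (−1)^k q^{2k²} / ((q;q)_{n−k} (q;q)_{n+k}). -/

import Mathlib

/-!
Pairing the two Pochhammer symbols, `(q⁻ⁿ;q)ₖ (-q⁻ⁿ;q)ₖ = (q⁻²ⁿ;q²)ₖ`, turns the left side into
`∑ₘ q^{m²} / ((q²;q²)ₘ (q;q)ₙ₋ₘ)`. Expanding `1 / (q²;q²)ₘ` by Gauss's identity
`1 / (q²;q²)ₘ = ∑_{|k| ≤ m} (-1)ᵏ q^{k²} / ((q;q)ₘ₋ₖ (q;q)ₘ₊ₖ)`, exchanging the two sums and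
summing over `m` with the Durfee rectangle identity
`∑ₘ q^{m² - k²} / ((q;q)ₙ₋ₘ (q;q)ₘ₋ₖ (q;q)ₘ₊ₖ) = 1 / ((q;q)ₙ₋ₖ (q;q)ₙ₊ₖ)` gives the right side.
Both identities are proved by induction, each recurrence being certified by an explicit
telescoping (Zeilberger) certificate.
-/

open Finset

noncomputable def qp (x q : ℂ) (n : ℕ) : ℂ := ∏ j ∈ Finset.range n, (1 - x * q ^ j)

noncomputable def qpinf (x q : ℂ) : ℂ := ∏' j : ℕ, (1 - x * q ^ j)

noncomputable def qbinom (q : ℂ) (n k : ℕ) : ℂ := qp q q n / (qp q q k * qp q q (n - k))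

noncomputable def RS (a b q : ℂ) (n : ℕ) : ℂ :=
  ∑ k ∈ Finset.range (n + 1), qbinom q n k * a ^ k * b ^ (n - k)

noncomputable def Tsum (q : ℂ) (r n s : ℕ) : ℂ :=
  ∑ k ∈ Finset.range (n + 1),
    qp (q ^ (-(2 * (n : ℤ)))) (q ^ 2) k / (qp q q k * qp (q ^ ((1 : ℤ) + r - n)) q k)
      * q ^ ((2 - (s : ℤ)) * k)

noncomputable def gam (q : ℂ) (n : ℕ) : ℂ :=
  ∑ k ∈ Finset.range (n + 1), qbinom q n k * q ^ (k ^ 2) / qp (-q) q k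

section QPochhammer

@[simp] lemma qp_zero (x q : ℂ) : qp x q 0 = 1 := prod_range_zero _

lemma qp_succ (x q : ℂ) (n : ℕ) : qp x q (n + 1) = qp x q n * (1 - x * q ^ n) :=
  prod_range_succ _ _

lemma qp_succ' (x q : ℂ) (n : ℕ) : qp x q (n + 1) = (1 - x) * qp (x * q) q n := by
  simp only [qp, prod_range_succ', pow_succ, pow_zero, mul_one, mul_assoc, mul_comm]

lemma qp_self_succ (q : ℂ) (n : ℕ) : qp q q (n + 1) = qp q q n * (1 - q ^ (n + 1)) := by
  rw [qp_succ, pow_succ']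

lemma qp_mul_qp_neg (x q : ℂ) (n : ℕ) : qp x q n * qp (-x) q n = qp (x ^ 2) (q ^ 2) n := by
  rw [qp, qp, qp, ← prod_mul_distrib]
  exact prod_congr rfl fun j _ => by ring

lemma qp_ne_zero {x q : ℂ} (hx : ‖x‖ < 1) (hq : ‖q‖ ≤ 1) (n : ℕ) : qp x q n ≠ 0 := by
  refine prod_ne_zero_iff.mpr fun j _ h => ?_
  have : ‖x * q ^ j‖ < 1 := by
    rw [norm_mul, norm_pow]
    exact (mul_le_of_le_one_right (norm_nonneg x) (pow_le_one₀ (norm_nonneg q) hq)).trans_lt hx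
  rw [← sub_eq_zero.mp h, norm_one] at this
  exact this.false

lemma qp_self_ne_zero {q : ℂ} (hq : ‖q‖ < 1) (n : ℕ) : qp q q n ≠ 0 :=
  qp_ne_zero hq hq.le n

lemma qp_sq_self_ne_zero {q : ℂ} (hq : ‖q‖ < 1) (n : ℕ) : qp (q ^ 2) (q ^ 2) n ≠ 0 :=
  qp_self_ne_zero (by rw [norm_pow]; exact pow_lt_one₀ (norm_nonneg q) hq two_ne_zero) n

lemma one_sub_pow_succ_ne_zero {q : ℂ} (hq : ‖q‖ < 1) (n : ℕ) : 1 - q ^ (n + 1) ≠ 0 :=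
  right_ne_zero_of_mul (qp_self_succ q n ▸ qp_self_ne_zero hq (n + 1))

lemma two_mul_choose_two_add_self (k : ℕ) : 2 * k.choose 2 + k = k ^ 2 := by
  induction k with
  | zero => rfl
  | succ k ih => rw [Nat.choose_succ_succ', Nat.choose_one_right]; linear_combination ih

/-- With `x = q⁻ⁿ` and `n = k + b` this is the classical evaluation
`(q⁻ⁿ;q)ₖ = (-1)ᵏ q^(k.choose 2 - n k) (q;q)ₙ / (q;q)ₙ₋ₖ`. -/
lemma qp_mul_qp_of_mul_pow_eq_one {x q : ℂ} {k b : ℕ} (h : x * q ^ (k + b) = 1) :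
    qp x q k * qp q q b = (-x) ^ k * q ^ k.choose 2 * qp q q (k + b) := by
  induction k generalizing x with
  | zero => simp
  | succ k ih =>
    have ih := ih (x := x * q) (by rw [← h]; ring)
    rw [qp_succ', Nat.choose_succ_succ', Nat.choose_one_right, show k + 1 + b = k + b + 1 by ring,
      qp_self_succ]
    linear_combination (1 - x) * ih - (-x) ^ k * q ^ (k + k.choose 2) * qp q q (k + b) * h

lemma qp_zpow_neg_mul_qp_neg (q : ℂ) (hq0 : q ≠ 0) {n k : ℕ} (hk : k ≤ n) :
    qp (q ^ (-(n : ℤ))) q k * qp (-(q ^ (-(n : ℤ)))) q k * (-q) ^ k * q ^ (n ^ 2) *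
        qp (q ^ 2) (q ^ 2) (n - k) =
      q ^ ((n - k) ^ 2) * qp (q ^ 2) (q ^ 2) n := by
  obtain ⟨b, rfl⟩ := Nat.exists_eq_add_of_le hk
  set y := q ^ (-((k + b : ℕ) : ℤ))
  have hy : y * q ^ (k + b) = 1 := by
    simp only [y, zpow_neg, zpow_natCast, inv_mul_cancel₀ (pow_ne_zero _ hq0)]
  have h := qp_mul_qp_of_mul_pow_eq_one (x := y ^ 2) (q := q ^ 2) (k := k) (b := b)
    (by rw [← pow_mul, pow_mul', ← mul_pow, hy, one_pow])
  have hpow : (-(y ^ 2)) ^ k * (q ^ 2) ^ k.choose 2 * (-q) ^ k = y ^ (2 * k) * q ^ (k ^ 2) := by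
    rw [mul_right_comm, ← mul_pow, neg_mul_neg, ← two_mul_choose_two_add_self]
    ring
  have hy2k : (y * q ^ (k + b)) ^ (2 * k) = 1 := by rw [hy, one_pow]
  rw [qp_mul_qp_neg, show k + b - k = b by omega]
  linear_combination (-q) ^ k * q ^ ((k + b) ^ 2) * h +
    q ^ ((k + b) ^ 2) * qp (q ^ 2) (q ^ 2) (k + b) * hpow +
    q ^ (b ^ 2) * qp (q ^ 2) (q ^ 2) (k + b) * hy2k

end QPochhammer

theorem sum_range_mul_sub_sum_range_eq {R : Type*} [CommRing R] {f g G : ℕ → R} {c : R} {N : ℕ}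
    (h : ∀ i < N, f i * c - g i = G (i + 1) - G i) :
    (∑ i ∈ range N, f i) * c - ∑ i ∈ range N, g i = G N - G 0 := by
  rw [sum_mul, ← sum_sub_distrib, ← sum_range_sub]
  exact sum_congr rfl fun i hi => h i (mem_range.mp hi)

lemma sum_Icc_neg_self_eq_sum_range {M : Type*} [AddCommMonoid M] (f : ℤ → M) (m : ℕ) :
    ∑ k ∈ Icc (-(m : ℤ)) m, f k = ∑ i ∈ range (2 * m + 1), f (i - m) := by
  rw [Int.Icc_eq_finset_map, sum_map, show ((m : ℤ) + 1 - -m).toNat = 2 * m + 1 by omega]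
  exact sum_congr rfl fun i _ => congrArg f (by simp; ring)

lemma apply_toNat_sub_mul_apply_toNat_add {M : Type*} [CommMonoid M] (f : ℕ → M) {m : ℕ} {k : ℤ}
    (hk : k.natAbs ≤ m) :
    f ((m : ℤ) - k).toNat * f ((m : ℤ) + k).toNat = f (m - k.natAbs) * f (m + k.natAbs) := by
  obtain ⟨j, rfl | rfl⟩ := Int.eq_nat_or_neg k
  · rw [Int.natAbs_natCast] at *
    rw [show ((m : ℤ) - j).toNat = m - j by omega, show ((m : ℤ) + j).toNat = m + j by omega]
  · rw [Int.natAbs_neg, Int.natAbs_natCast] at *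
    rw [show ((m : ℤ) - -j).toNat = m + j by omega, show ((m : ℤ) + -j).toNat = m - j by omega,
      mul_comm]

lemma neg_one_zpow_natCast_sub (i m : ℕ) : (-1 : ℂ) ^ ((i : ℤ) - m) = (-1) ^ (i + m) := by
  rw [zpow_sub₀ (by norm_num), zpow_natCast, zpow_natCast, div_eq_iff (by simp), pow_add,
    mul_assoc, ← pow_add, Even.neg_one_pow ⟨m, rfl⟩, mul_one]

section Durfee

variable {q : ℂ}

/-- Zeilberger certificate for `D (a + 1) * (1 - q ^ (a + 1)) * (1 - q ^ (a + d + 1)) = D a`,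
where `D a` is the left side of `durfee_identity`. -/
noncomputable def durfeeCert (q : ℂ) (d a i : ℕ) : ℂ :=
  q ^ (i * (i + d)) * (q ^ (a + 1) + q ^ (a + 1 + d) - q ^ (a + 1 - i) - q ^ (a + 1 + d + i)) /
    (qp q q (a + 1 - i) * qp q q i * qp q q (i + d))

lemma durfeeCert_succ_sub (hq : ‖q‖ < 1) {d a i : ℕ} (hi : i ≤ a) :
    q ^ (i * (i + d)) / (qp q q (a + 1 - i) * qp q q i * qp q q (i + d)) *
        ((1 - q ^ (a + 1)) * (1 - q ^ (a + d + 1))) -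
      q ^ (i * (i + d)) / (qp q q (a - i) * qp q q i * qp q q (i + d)) =
      durfeeCert q d a (i + 1) - durfeeCert q d a i := by
  obtain ⟨b, rfl⟩ := Nat.exists_eq_add_of_le hi
  rw [durfeeCert, durfeeCert, show i + b + 1 - i = b + 1 by omega, show i + b - i = b by omega,
    show i + b + 1 - (i + 1) = b by omega, show i + 1 + d = i + d + 1 by omega,
    qp_self_succ q b, qp_self_succ q i, qp_self_succ q (i + d)]
  have := qp_self_ne_zero hq i
  have := qp_self_ne_zero hq b
  have := qp_self_ne_zero hq (i + d)
  have := one_sub_pow_succ_ne_zero hq i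
  have := one_sub_pow_succ_ne_zero hq b
  have := one_sub_pow_succ_ne_zero hq (i + d)
  field_simp
  ring

theorem durfee_identity (hq : ‖q‖ < 1) (d a : ℕ) :
    ∑ i ∈ range (a + 1), q ^ (i * (i + d)) / (qp q q (a - i) * qp q q i * qp q q (i + d)) =
      1 / (qp q q a * qp q q (a + d)) := by
  induction a with
  | zero => simp
  | succ a ih =>
    have tele := sum_range_mul_sub_sum_range_eq (N := a + 1) (G := durfeeCert q d a)
      fun i hi => durfeeCert_succ_sub hq (Nat.le_of_lt_succ hi)
    have hfirst : durfeeCert q d a 0 = 0 := by simp [durfeeCert]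
    have hlast : q ^ ((a + 1) * (a + 1 + d)) / (qp q q (a + 1 - (a + 1)) * qp q q (a + 1) *
        qp q q (a + 1 + d)) * ((1 - q ^ (a + 1)) * (1 - q ^ (a + d + 1))) =
          -durfeeCert q d a (a + 1) := by
      simp only [durfeeCert, Nat.sub_self]
      ring
    rw [ih, hfirst] at tele
    have hP := mul_ne_zero (qp_self_ne_zero hq a) (qp_self_ne_zero hq (a + d))
    rw [eq_div_iff (mul_ne_zero (qp_self_ne_zero hq _) (qp_self_ne_zero hq _)),
      show a + 1 + d = a + d + 1 by omega, qp_self_succ, qp_self_succ, sum_range_succ]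
    linear_combination (qp q q a * qp q q (a + d)) * (tele + hlast) + mul_one_div_cancel hP

end Durfee

section Gauss

variable {q : ℂ}

/-- `(-1) ^ (i - m) * q ^ ((i - m) ^ 2) / ((q;q)_(2m-i) * (q;q)_i)`, written with natural
exponents. -/
noncomputable def gaussTerm (q : ℂ) (m i : ℕ) : ℂ :=
  (-1) ^ (i + m) * q ^ (m ^ 2) / (q ^ (i * (2 * m - i)) * qp q q (2 * m - i) * qp q q i)

/-- Zeilberger certificate for `S (m + 1) * (1 - q ^ (2 * m + 2)) = S m`, where
`S m = ∑ i ∈ range (2 * m + 1), gaussTerm q m i`; it is shifted by one so that the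
telescoping runs over the inner indices of `S (m + 1)`. -/
noncomputable def gaussCert (q : ℂ) (m i : ℕ) : ℂ :=
  (-1) ^ (i + m) * q ^ ((m + 1) ^ 2) * (q ^ (2 * m + 2) - q ^ (2 * m + 1 - i)) /
    (q ^ ((i + 1) * (2 * m + 1 - i)) * qp q q (2 * m + 1 - i) * qp q q (i + 1))

lemma gaussTerm_succ_sub (hq0 : q ≠ 0) (hq : ‖q‖ < 1) {m i : ℕ} (hi : i ≤ 2 * m) :
    gaussTerm q (m + 1) (i + 1) * (1 - q ^ (2 * m + 2)) - gaussTerm q m i =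
      gaussCert q m (i + 1) - gaussCert q m i := by
  obtain ⟨b, hb⟩ := Nat.exists_eq_add_of_le hi
  rw [gaussTerm, gaussTerm, gaussCert, gaussCert, show 2 * (m + 1) - (i + 1) = b + 1 by omega,
    show 2 * m - i = b by omega, show 2 * m + 1 - (i + 1) = b by omega,
    show 2 * m + 1 - i = b + 1 by omega, show (m + 1) ^ 2 = m ^ 2 + (i + b + 1) by rw [← hb]; ring,
    show 2 * m + 2 = i + b + 2 by omega, qp_self_succ q b, qp_self_succ q (i + 1),
    qp_self_succ q i]
  have := qp_self_ne_zero hq i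
  have := qp_self_ne_zero hq b
  have := one_sub_pow_succ_ne_zero hq i
  have := one_sub_pow_succ_ne_zero hq (i + 1)
  have := one_sub_pow_succ_ne_zero hq b
  field_simp
  ring

lemma gaussTerm_succ_zero_mul (hq0 : q ≠ 0) (hq : ‖q‖ < 1) (m : ℕ) :
    gaussTerm q (m + 1) 0 * (1 - q ^ (2 * m + 2)) = gaussCert q m 0 := by
  have := qp_self_ne_zero hq (2 * m + 1)
  have := one_sub_pow_succ_ne_zero hq (2 * m + 1)
  have : 1 - q ≠ 0 := by simpa using one_sub_pow_succ_ne_zero hq 0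
  simp only [gaussTerm, gaussCert, Nat.sub_zero, zero_add, zero_mul, one_mul, pow_zero, qp_zero,
    show 2 * (m + 1) = 2 * m + 1 + 1 by ring, qp_self_succ q (2 * m + 1),
    show qp q q 1 = 1 - q by simp [qp]]
  field_simp
  ring

lemma gaussTerm_succ_last_mul (m : ℕ) :
    gaussTerm q (m + 1) (2 * m + 2) * (1 - q ^ (2 * m + 2)) = -gaussCert q m (2 * m + 1) := by
  simp only [gaussTerm, gaussCert, show 2 * (m + 1) = 2 * m + 2 by ring, Nat.sub_self]
  ring

theorem sum_gaussTerm (hq0 : q ≠ 0) (hq : ‖q‖ < 1) (m : ℕ) :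
    ∑ i ∈ range (2 * m + 1), gaussTerm q m i = 1 / qp (q ^ 2) (q ^ 2) m := by
  induction m with
  | zero => simp [gaussTerm]
  | succ m ih =>
    have tele := sum_range_mul_sub_sum_range_eq (N := 2 * m + 1) (G := gaussCert q m)
      fun i hi => gaussTerm_succ_sub hq0 hq (Nat.le_of_lt_succ hi)
    rw [ih] at tele
    rw [eq_div_iff (qp_sq_self_ne_zero hq _), qp_succ,
      show 2 * (m + 1) + 1 = 2 * m + 1 + 1 + 1 from rfl, sum_range_succ, sum_range_succ']
    linear_combination qp (q ^ 2) (q ^ 2) m *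
        (tele + gaussTerm_succ_zero_mul hq0 hq m + gaussTerm_succ_last_mul m) +
      mul_one_div_cancel (qp_sq_self_ne_zero hq m)

theorem gauss_identity (hq0 : q ≠ 0) (hq : ‖q‖ < 1) (m : ℕ) :
    ∑ k ∈ Icc (-(m : ℤ)) m,
        (-1) ^ k * q ^ (k ^ 2) / (qp q q (m - k).toNat * qp q q (m + k).toNat) =
      1 / qp (q ^ 2) (q ^ 2) m := by
  rw [← sum_gaussTerm hq0 hq m, sum_Icc_neg_self_eq_sum_range]
  refine sum_congr rfl fun i hi => ?_
  have hi : i ≤ 2 * m := by rw [mem_range] at hi; omega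
  have hpow : q ^ (((i : ℤ) - m) ^ 2) * q ^ (i * (2 * m - i)) = q ^ (m ^ 2) := by
    rw [← zpow_natCast, ← zpow_natCast, ← zpow_add₀ hq0]
    congr 1
    push_cast [Nat.cast_sub hi]
    ring
  rw [gaussTerm, show ((m : ℤ) - (i - m)).toNat = 2 * m - i by omega,
    show ((m : ℤ) + (i - m)).toNat = i by omega, neg_one_zpow_natCast_sub, ← hpow]
  have := pow_ne_zero (i * (2 * m - i)) hq0
  field_simp

end Gauss

theorem durfee_identity_centered {q : ℂ} (hq : ‖q‖ < 1) {n : ℕ} {k : ℤ} (hk : k.natAbs ≤ n) :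
    ∑ m ∈ Icc k.natAbs n,
        q ^ (m ^ 2) / (qp q q (n - m) * (qp q q (m - k).toNat * qp q q (m + k).toNat)) =
      q ^ (k ^ 2) / (qp q q (n - k).toNat * qp q q (n + k).toNat) := by
  obtain ⟨a, rfl⟩ := Nat.exists_eq_add_of_le hk
  set j := k.natAbs
  have hk2 : q ^ (k ^ 2) = q ^ (j ^ 2) := by
    rw [← Int.natAbs_sq, ← Nat.cast_pow, zpow_natCast]
  rw [apply_toNat_sub_mul_apply_toNat_add _ hk, hk2, show j + a - j = a by omega,
    show j + a + j = a + 2 * j by omega, ← Ico_add_one_right_eq_Icc, sum_Ico_eq_sum_range,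
    show j + a + 1 - j = a + 1 by omega, ← mul_one (q ^ (j ^ 2)), mul_div_assoc,
    ← durfee_identity hq (2 * j) a, mul_sum]
  refine sum_congr rfl fun i _ => ?_
  rw [apply_toNat_sub_mul_apply_toNat_add _ (by omega), show j + a - (j + i) = a - i by omega,
    show j + i - j = i by omega, show j + i + j = i + 2 * j by omega]
  ring

theorem stmt17 (q : ℂ) (hq0 : q ≠ 0) (hq : ‖q‖ < 1) (n : ℕ) :
    q ^ (n ^ 2) / qp (q ^ 2) (q ^ 2) n *
        ∑ k ∈ Finset.range (n + 1),
          qp (q ^ (-(n : ℤ))) q k * qp (-(q ^ (-(n : ℤ)))) q k / qp q q k * (-q) ^ k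
      = ∑ k ∈ Finset.Icc (-(n : ℤ)) (n : ℤ),
          (-1 : ℂ) ^ k * q ^ (2 * k ^ 2)
            / (qp q q ((n : ℤ) - k).toNat * qp q q ((n : ℤ) + k).toNat) := by
  calc _ = ∑ m ∈ range (n + 1), q ^ (m ^ 2) / qp q q (n - m) * (1 / qp (q ^ 2) (q ^ 2) m) := by
        rw [mul_sum]
        conv_rhs => rw [← sum_range_reflect]
        refine sum_congr rfl fun k hk => ?_
        have hk : k ≤ n := by rw [mem_range] at hk; omega
        rw [show n + 1 - 1 - k = n - k by omega, show n - (n - k) = k by omega]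
        have := qp_sq_self_ne_zero hq n
        have := qp_sq_self_ne_zero hq (n - k)
        have := qp_self_ne_zero hq k
        field_simp
        linear_combination qp_zpow_neg_mul_qp_neg q hq0 hk
    _ = ∑ m ∈ range (n + 1), ∑ k ∈ Icc (-(m : ℤ)) m, (-1) ^ k * q ^ (k ^ 2) *
          (q ^ (m ^ 2) / (qp q q (n - m) * (qp q q (m - k).toNat * qp q q (m + k).toNat))) := by
        refine sum_congr rfl fun m _ => ?_
        rw [← gauss_identity hq0 hq m, mul_sum]
        exact sum_congr rfl fun k _ => by ring
    _ = ∑ k ∈ Icc (-(n : ℤ)) n, ∑ m ∈ Icc k.natAbs n, (-1) ^ k * q ^ (k ^ 2) *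
          (q ^ (m ^ 2) / (qp q q (n - m) * (qp q q (m - k).toNat * qp q q (m + k).toNat))) :=
        sum_comm' fun m k => by simp only [mem_range, mem_Icc]; omega
    _ = _ := by
        refine sum_congr rfl fun k hk => ?_
        rw [← mul_sum, durfee_identity_centered hq (by rw [mem_Icc] at hk; omega), two_mul,
          zpow_add₀ hq0]
        ring
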